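/- arXiv:2107.13690 — 2 statements merged into one kernel-verified Lean document; each statement's English description precedes it below -/
import Mathlib

section
/- In the setup (G centerless, f, h : G → Aut(G) with h(σ) = conj(g(σ))∘f(σ), g a bijection satisfying g(στ) = g(σ)·f(σ)(g(τ)), and N = {ρ(g(σ))∘f(σ) : σ ∈ G} a normal subgroup of Hol(G)), the commutator subgroup [G,G] is contained in ker(f)·ker(h), and the images f(G) and h(G) commute elementwise in Aut(G), i.e., f(σ)h(τ) = h(τ)f(σ) for all σ, τ ∈ G. -/
open scoped commutatorElement

/-- The left regular representation `λ : G →* Perm G`, `λ(σ)(x) = σ·x`. -/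
def lambda (G : Type*) [Group G] : G →* Equiv.Perm G where
  toFun σ := Equiv.mulLeft σ
  map_one' := by ext x; simp
  map_mul' σ τ := by ext x; simp [mul_assoc]

/-- The right regular representation `ρ : G →* Perm G`, `ρ(σ)(x) = x·σ⁻¹`. -/
def rho (G : Type*) [Group G] : G →* Equiv.Perm G where
  toFun σ := Equiv.mulRight σ⁻¹
  map_one' := by ext x; simp
  map_mul' σ τ := by ext x; simp [mul_assoc]

/-- The holomorph `Hol(G)`: the normalizer of `λ(G)` in `Perm G`. -/
def Hol (G : Type*) [Group G] : Subgroup (Equiv.Perm G) :=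
  Subgroup.normalizer ((lambda G).range : Set (Equiv.Perm G))

/-!
Put `F = f ∘ g⁻¹ : G → Aut(G)`, so that `h(τ) = conj(g τ) ∘ F(g τ)`. Conjugating
`ρ(g σ) ∘ f(σ) ∈ N` by an automorphism (an element of `Hol(G)`) and comparing values shows
`F(α x) = α F(x) α⁻¹` for all `α ∈ Aut(G)`. Together with the cocycle identity this makes `F`
an anti-homomorphism, and then `F ∘ h(τ) = F`; applying the conjugation rule to `α = h(τ)`
shows that `h(τ)` commutes with every `F(x) = f(g⁻¹ x)`. For a commutator `[σ, τ]`, the element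
`k = g⁻¹((g τ)⁻¹ · f(σ)(g τ))` satisfies `f(k) = [f σ, f τ]` and `h(k) = 1`, so
`[σ, τ] = ([σ, τ] k⁻¹) · k ∈ ker f · ker h`.
-/

@[simp]
lemma lambda_apply {G : Type*} [Group G] (a x : G) : lambda G a x = a * x := rfl

@[simp]
lemma rho_apply {G : Type*} [Group G] (a x : G) : rho G a x = x * a⁻¹ := rfl

namespace MulAut

variable {G : Type*} [Group G]

@[simp]
lemma toPerm_apply (α : MulAut G) (x : G) : toPerm G α x = α x := rfl

@[simp]
lemma toPerm_symm_apply (α : MulAut G) (x : G) : (toPerm G α).symm x = α⁻¹ x := rfl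

lemma conj_map (α : MulAut G) (a : G) : conj (α a) = α * conj a * α⁻¹ := by
  ext x
  simp [MulAut.conj_apply, map_mul, MulAut.inv_apply]

lemma toPerm_mul_lambda_mul_inv (α : MulAut G) (a : G) :
    toPerm G α * lambda G a * (toPerm G α)⁻¹ = lambda G (α a) := by
  ext x
  simp

lemma toPerm_mem_Hol (α : MulAut G) : toPerm G α ∈ Hol G := by
  refine Subgroup.mem_normalizer_iff.mpr fun p => ⟨?_, ?_⟩
  · rintro ⟨a, rfl⟩
    exact ⟨α a, (toPerm_mul_lambda_mul_inv α a).symm⟩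
  · rintro ⟨b, hb⟩
    refine ⟨α⁻¹ b, ?_⟩
    rw [← toPerm_mul_lambda_mul_inv, hb, map_inv]
    group

lemma toPerm_mul_rho_mul_toPerm_mul_inv (α β : MulAut G) (a : G) :
    toPerm G α * (rho G a * toPerm G β) * (toPerm G α)⁻¹ =
      rho G (α a) * toPerm G (α * β * α⁻¹) := by
  ext x
  simp

end MulAut

lemma rho_mul_toPerm_inj {G : Type*} [Group G] {a a' : G} {β β' : MulAut G} :
    rho G a * MulAut.toPerm G β = rho G a' * MulAut.toPerm G β' ↔ a = a' ∧ β = β' := by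
  refine ⟨fun h => ?_, by rintro ⟨rfl, rfl⟩; rfl⟩
  have ha : a = a' := by simpa using DFunLike.congr_fun h 1
  subst ha
  refine ⟨rfl, MulEquiv.ext fun x => ?_⟩
  simpa using DFunLike.congr_fun h x

lemma MonoidHom.mem_ker_sup_ker_of_eq {G H K : Type*} [Group G] [Group H] [Group K]
    {f : G →* H} {h : G →* K} {x k : G} (hf : f x = f k) (hk : h k = 1) :
    x ∈ f.ker ⊔ h.ker := by
  have hx : x = x * k⁻¹ * k := by group
  rw [hx]
  exact mul_mem (Subgroup.mem_sup_left (by simp [hf])) (Subgroup.mem_sup_right hk)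

section AntiConj

variable {G : Type*} [Group G] {F : G → MulAut G}
  (hF : ∀ (α : MulAut G) (x : G), F (α x) = α * F x * α⁻¹)

include hF

lemma map_mul_rev_of_map_mul_apply (hmul : ∀ x z, F (x * F x z) = F x * F z) (x y : G) :
    F (x * y) = F y * F x := by
  obtain ⟨z, rfl⟩ : ∃ z, F x z = y := ⟨(F x)⁻¹ y, by simp⟩
  rw [hmul, hF]
  group

variable (hanti : ∀ x y, F (x * y) = F y * F x)

include hanti

omit hF in
lemma map_inv_of_map_mul_rev (x : G) : F x⁻¹ = (F x)⁻¹ := by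
  have h1 : F 1 = 1 := by simpa using hanti 1 1
  refine eq_inv_of_mul_eq_one_left ?_
  rw [← hanti, mul_inv_cancel, h1]

lemma commute_conj_mul_map (a y : G) : Commute (MulAut.conj a * F a) (F y) := by
  have hinv := map_inv_of_map_mul_rev hanti
  have hfix : F (MulAut.conj a (F a y)) = F y := by
    rw [MulAut.conj_apply, hanti, hanti, hF, hinv]
    group
  have := hF (MulAut.conj a * F a) y
  rw [MulAut.mul_apply, hfix] at this
  exact (eq_mul_inv_iff_mul_eq.mp this).symm

lemma exists_map_eq_commutatorElement (a b : G) :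
    ∃ w, F w = ⁅F b, F a⁆ ∧ MulAut.conj w * F w = 1 := by
  set β := F b
  have hc : β * (MulAut.conj a * F a) = (MulAut.conj a * F a) * β :=
    (commute_conj_mul_map hF hanti a b).symm.eq
  refine ⟨a⁻¹ * β a, ?_, ?_⟩
  · rw [hanti, hF, map_inv_of_map_mul_rev hanti, commutatorElement_def]
  · rw [hanti, hF, map_inv_of_map_mul_rev hanti, map_mul, map_inv, MulAut.conj_map]
    calc (MulAut.conj a)⁻¹ * (β * MulAut.conj a * β⁻¹) * (β * F a * β⁻¹ * (F a)⁻¹)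
        = (MulAut.conj a)⁻¹ * (β * (MulAut.conj a * F a)) * β⁻¹ * (F a)⁻¹ := by group
      _ = 1 := by rw [hc]; group

end AntiConj

section Cocycle

variable {G : Type*} [Group G] (f : G →* MulAut G) (g : Equiv.Perm G)

lemma map_symm_mul_apply (hrel : ∀ σ τ : G, g (σ * τ) = g σ * (f σ) (g τ)) (x z : G) :
    f (g.symm (x * f (g.symm x) z)) = f (g.symm x) * f (g.symm z) := by
  obtain ⟨σ, rfl⟩ := g.surjective x
  obtain ⟨τ, rfl⟩ := g.surjective z
  rw [Equiv.symm_apply_apply, Equiv.symm_apply_apply, ← hrel, Equiv.symm_apply_apply, map_mul]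

lemma map_symm_apply_eq_conj {N : Set (Equiv.Perm G)}
    (hN : N = {q | ∃ σ : G, q = rho G (g σ) * MulAut.toPerm G (f σ)})
    (hNnorm : ∀ α : MulAut G, ∀ n ∈ N,
      MulAut.toPerm G α * n * (MulAut.toPerm G α)⁻¹ ∈ N)
    (α : MulAut G) (x : G) :
    f (g.symm (α x)) = α * f (g.symm x) * α⁻¹ := by
  subst hN
  obtain ⟨σ', hσ'⟩ := hNnorm α _ ⟨g.symm x, rfl⟩
  rw [MulAut.toPerm_mul_rho_mul_toPerm_mul_inv, rho_mul_toPerm_inj, Equiv.apply_symm_apply] at hσ'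
  rw [hσ'.1, Equiv.symm_apply_apply, hσ'.2]

end Cocycle

theorem commutator_le_and_images_commute_general
    (G : Type*) [Group G]
    (f h : G →* MulAut G) (g : Equiv.Perm G)
    (hrel : ∀ σ τ : G, g (σ * τ) = g σ * (f σ) (g τ))
    (hh : ∀ σ : G, h σ = MulAut.conj (g σ) * f σ)
    (N : Subgroup (Equiv.Perm G))
    (hN : (N : Set (Equiv.Perm G))
      = {q | ∃ σ : G, q = rho G (g σ) * MulAut.toPerm G (f σ)})
    (hNnorm : ∀ x ∈ Hol G, ∀ n ∈ N, x * n * x⁻¹ ∈ N)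
    :
    commutator G ≤ f.ker ⊔ h.ker ∧ ∀ σ τ : G, f σ * h τ = h τ * f σ := by
  let F : G → MulAut G := fun x => f (g.symm x)
  have hF : ∀ (α : MulAut G) x, F (α x) = α * F x * α⁻¹ :=
    map_symm_apply_eq_conj f g hN fun α n hn => hNnorm _ (MulAut.toPerm_mem_Hol α) n hn
  have hanti : ∀ x y, F (x * y) = F y * F x :=
    map_mul_rev_of_map_mul_apply hF (map_symm_mul_apply f g hrel)
  have hFg : ∀ σ, F (g σ) = f σ := fun σ => congrArg f (g.symm_apply_apply σ)
  have hcomm : ∀ σ τ : G, f σ * h τ = h τ * f σ := fun σ τ => by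
    simpa [hh, hFg] using (commute_conj_mul_map hF hanti (g τ) (g σ)).symm.eq
  refine ⟨?_, hcomm⟩
  rw [commutator_def, Subgroup.commutator_le]
  rintro σ - τ -
  obtain ⟨w, hfw, hhw⟩ := exists_map_eq_commutatorElement hF hanti (g τ) (g σ)
  refine MonoidHom.mem_ker_sup_ker_of_eq (k := g.symm w) ?_ ?_
  · simpa [hFg, map_commutatorElement] using hfw.symm
  · simpa [hh] using hhw

/-- In the setup, the commutator subgroup `[G,G]` is contained in
`ker(f)·ker(h)` (which equals `ker f ⊔ ker h` since kernels are normal), and the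
images `f(G)` and `h(G)` commute elementwise in `Aut(G)`. -/
theorem commutator_le_and_images_commute
    (G : Type*) [Group G] (hZ : Subgroup.center G = ⊥)
    (f h : G →* MulAut G) (g : Equiv.Perm G) (hg1 : g 1 = 1)
    (hrel : ∀ σ τ : G, g (σ * τ) = g σ * (f σ) (g τ))
    (hh : ∀ σ : G, h σ = MulAut.conj (g σ) * f σ)
    (N : Subgroup (Equiv.Perm G))
    (hN : (N : Set (Equiv.Perm G))
      = {q | ∃ σ : G, q = rho G (g σ) * MulAut.toPerm G (f σ)})
    (hNle : N ≤ Hol G)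
    (hNnorm : ∀ x ∈ Hol G, ∀ n ∈ N, x * n * x⁻¹ ∈ N)
    :
    commutator G ≤ f.ker ⊔ h.ker ∧ ∀ σ τ : G, f σ * h τ = h τ * f σ :=
  commutator_le_and_images_commute_general G f h g hrel hh N hN hNnorm
end

section
/- In the setup (G centerless, f, h : G → Aut(G) with h(σ) = conj(g(σ))∘f(σ), g a bijection satisfying g(στ) = g(σ)·f(σ)(g(τ)), and N = {ρ(g(σ))∘f(σ) : σ ∈ G} a normal subgroup of Hol(G)), the image g(ker(f)) is a characteristic subgroup of G isomorphic to ker(f), and the image g(ker(h)) is a characteristic subgroup of G isomorphic to ker(h). -/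
/-!
Conjugating `ρ(g σ) ∘ f σ ∈ N` by an automorphism `φ ∈ Hol(G)` gives `ρ(φ (g σ)) ∘ φ f(σ) φ⁻¹`,
so normality of `N` says that `Aut(G)` acts on the pairs `(g σ, f σ)`. On `ker f` the cocycle
`g` is a homomorphism, so `g(ker f)` is a subgroup isomorphic to `ker f`, and it is stable
under `Aut(G)` because `f τ = φ f(σ) φ⁻¹ = 1` whenever `f σ = 1`. The case of `ker h` reduces
to this one: `σ ↦ (g σ)⁻¹` is a cocycle for `h`, and the pairs `((g σ)⁻¹, h σ)` are moved by
`Aut(G)` in the same way.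
-/

section Holomorph

variable {G : Type*} [Group G]

@[simp]
lemma MulAut.toPerm_apply_s11 (φ : MulAut G) (x : G) : MulAut.toPerm G φ x = φ x := rfl

@[simp]
lemma MulAut.toPerm_symm_apply_s11 (φ : MulAut G) (x : G) : (MulAut.toPerm G φ).symm x = φ⁻¹ x := rfl

lemma MulAut.toPerm_mul_lambda_mul_inv_s11 (φ : MulAut G) (s : G) :
    MulAut.toPerm G φ * lambda G s * (MulAut.toPerm G φ)⁻¹ = lambda G (φ s) := by
  ext x
  simp [lambda]

lemma MulAut.toPerm_mem_Hol_s11 (φ : MulAut G) : MulAut.toPerm G φ ∈ Hol G := by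
  rw [Hol, Subgroup.mem_normalizer_iff]
  intro p
  constructor
  · rintro ⟨s, rfl⟩
    exact ⟨φ s, (MulAut.toPerm_mul_lambda_mul_inv_s11 φ s).symm⟩
  · rintro ⟨s, hs⟩
    refine ⟨φ⁻¹ s, ?_⟩
    rw [← MulAut.toPerm_mul_lambda_mul_inv_s11, hs, map_inv, inv_inv]
    group

lemma MulAut.toPerm_mul_rho_mul_toPerm_inv (φ ψ : MulAut G) (x : G) :
    MulAut.toPerm G φ * (rho G x * MulAut.toPerm G ψ) * (MulAut.toPerm G φ)⁻¹
      = rho G (φ x) * MulAut.toPerm G (φ * ψ * φ⁻¹) := by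
  ext y
  simp [rho]

lemma rho_mul_toPerm_inj_s11 {x x' : G} {ψ ψ' : MulAut G}
    (h : rho G x * MulAut.toPerm G ψ = rho G x' * MulAut.toPerm G ψ') : x = x' ∧ ψ = ψ' := by
  have happ (y : G) : ψ y * x⁻¹ = ψ' y * x'⁻¹ := by simpa [rho] using congr($h y)
  have hx : x = x' := by simpa using happ 1
  subst hx
  exact ⟨rfl, MulEquiv.ext fun y => mul_right_cancel (happ y)⟩

end Holomorph

section Cocycle

variable {G : Type*} [Group G]

def IsAutStable (f : G →* MulAut G) (g : G → G) : Prop :=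
  ∀ (φ : MulAut G) (σ : G), ∃ τ, g τ = φ (g σ) ∧ f τ = φ * f σ * φ⁻¹

variable {f h : G →* MulAut G} {g : G → G}

lemma isAutStable_of_normal {N : Subgroup (Equiv.Perm G)}
    (hN : (N : Set (Equiv.Perm G)) = {q | ∃ σ : G, q = rho G (g σ) * MulAut.toPerm G (f σ)})
    (hNnorm : ∀ x ∈ Hol G, ∀ n ∈ N, x * n * x⁻¹ ∈ N) : IsAutStable f g := by
  intro φ σ
  have hσ : rho G (g σ) * MulAut.toPerm G (f σ) ∈ (N : Set (Equiv.Perm G)) := hN ▸ ⟨σ, rfl⟩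
  have hconj := hNnorm _ (MulAut.toPerm_mem_Hol_s11 φ) _ hσ
  rw [← SetLike.mem_coe, hN, MulAut.toPerm_mul_rho_mul_toPerm_inv] at hconj
  obtain ⟨τ, hτ⟩ := hconj
  obtain ⟨hg, hf⟩ := rho_mul_toPerm_inj_s11 hτ
  exact ⟨τ, hg.symm, hf.symm⟩

def cocycleKerHom (hg1 : g 1 = 1) (hrel : ∀ σ τ, g (σ * τ) = g σ * f σ (g τ)) : f.ker →* G where
  toFun σ := g σ
  map_one' := hg1
  map_mul' σ τ := by
    rw [Subgroup.coe_mul, hrel, f.mem_ker.mp σ.2, MulAut.one_apply]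

lemma exists_characteristic_coe_eq_image_ker (hg : Function.Injective g) (hg1 : g 1 = 1)
    (hrel : ∀ σ τ, g (σ * τ) = g σ * f σ (g τ)) (hstab : IsAutStable f g) :
    ∃ K : Subgroup G, (K : Set G) = g '' f.ker ∧ K.Characteristic ∧ Nonempty (K ≃* f.ker) := by
  set e := cocycleKerHom hg1 hrel
  have he : Function.Injective e := fun σ τ hστ => Subtype.ext (hg hστ)
  refine ⟨e.range, ?_, ?_, ⟨(MonoidHom.ofInjective he).symm⟩⟩
  · ext x
    simp [e, cocycleKerHom]
  · rw [Subgroup.characteristic_iff_map_le]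
    rintro φ - ⟨-, ⟨σ, rfl⟩, rfl⟩
    obtain ⟨τ, hgτ, hfτ⟩ := hstab φ σ
    have hτ : τ ∈ f.ker := by
      rw [f.mem_ker, hfτ, f.mem_ker.mp σ.2, mul_one, mul_inv_cancel]
    exact ⟨⟨τ, hτ⟩, hgτ⟩

lemma inv_cocycle (hrel : ∀ σ τ, g (σ * τ) = g σ * f σ (g τ))
    (hh : ∀ σ, h σ = MulAut.conj (g σ) * f σ) (σ τ : G) :
    (g (σ * τ))⁻¹ = (g σ)⁻¹ * h σ (g τ)⁻¹ := by
  simp [hrel, hh, mul_assoc]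

lemma IsAutStable.inv (hstab : IsAutStable f g) (hh : ∀ σ, h σ = MulAut.conj (g σ) * f σ) :
    IsAutStable h fun σ => (g σ)⁻¹ := by
  intro φ σ
  obtain ⟨τ, hgτ, hfτ⟩ := hstab φ σ
  have hconj : MulAut.conj (φ (g σ)) = φ * MulAut.conj (g σ) * φ⁻¹ := by
    ext x
    simp [mul_assoc]
  refine ⟨τ, by simp only [hgτ, map_inv], ?_⟩
  rw [hh, hh, hgτ, hfτ, hconj]
  group

lemma Subgroup.coe_eq_image_of_coe_eq_image_inv {K : Subgroup G} {S : Set G}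
    (hK : (K : Set G) = (fun σ => (g σ)⁻¹) '' S) : (K : Set G) = g '' S := by
  ext x
  rw [SetLike.mem_coe, ← K.inv_mem_iff, ← SetLike.mem_coe, hK]
  simp

end Cocycle

theorem image_of_kernels_characteristic_general
    (G : Type*) [Group G]
    (f h : G →* MulAut G) (g : Equiv.Perm G) (hg1 : g 1 = 1)
    (hrel : ∀ σ τ : G, g (σ * τ) = g σ * (f σ) (g τ))
    (hh : ∀ σ : G, h σ = MulAut.conj (g σ) * f σ)
    (N : Subgroup (Equiv.Perm G))
    (hN : (N : Set (Equiv.Perm G))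
      = {q | ∃ σ : G, q = rho G (g σ) * MulAut.toPerm G (f σ)})
    (hNnorm : ∀ x ∈ Hol G, ∀ n ∈ N, x * n * x⁻¹ ∈ N)
    :
    (∃ Kf : Subgroup G, (Kf : Set G) = ⇑g '' (f.ker : Set G) ∧
        Kf.Characteristic ∧ Nonempty (↥Kf ≃* ↥f.ker)) ∧
      (∃ Kh : Subgroup G, (Kh : Set G) = ⇑g '' (h.ker : Set G) ∧
        Kh.Characteristic ∧ Nonempty (↥Kh ≃* ↥h.ker)) := by
  have hstab : IsAutStable f g := isAutStable_of_normal hN hNnorm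
  refine ⟨exists_characteristic_coe_eq_image_ker g.injective hg1 hrel hstab, ?_⟩
  obtain ⟨K, hK, hchar, hiso⟩ := exists_characteristic_coe_eq_image_ker
    (inv_injective.comp g.injective) (by simp [hg1]) (inv_cocycle hrel hh) (hstab.inv hh)
  exact ⟨K, Subgroup.coe_eq_image_of_coe_eq_image_inv hK, hchar, hiso⟩

/-- In the setup, `g(ker f)` is a characteristic subgroup of `G`
isomorphic to `ker f`, and `g(ker h)` is a characteristic subgroup of `G`
isomorphic to `ker h`. -/
theorem image_of_kernels_characteristic
    (G : Type*) [Group G] (hZ : Subgroup.center G = ⊥)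
    (f h : G →* MulAut G) (g : Equiv.Perm G) (hg1 : g 1 = 1)
    (hrel : ∀ σ τ : G, g (σ * τ) = g σ * (f σ) (g τ))
    (hh : ∀ σ : G, h σ = MulAut.conj (g σ) * f σ)
    (N : Subgroup (Equiv.Perm G))
    (hN : (N : Set (Equiv.Perm G))
      = {q | ∃ σ : G, q = rho G (g σ) * MulAut.toPerm G (f σ)})
    (hNle : N ≤ Hol G)
    (hNnorm : ∀ x ∈ Hol G, ∀ n ∈ N, x * n * x⁻¹ ∈ N)
    :
    (∃ Kf : Subgroup G, (Kf : Set G) = ⇑g '' (f.ker : Set G) ∧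
        Kf.Characteristic ∧ Nonempty (↥Kf ≃* ↥f.ker)) ∧
      (∃ Kh : Subgroup G, (Kh : Set G) = ⇑g '' (h.ker : Set G) ∧
        Kh.Characteristic ∧ Nonempty (↥Kh ≃* ↥h.ker)) :=
  image_of_kernels_characteristic_general G f h g hg1 hrel hh N hN hNnorm
end
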